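/- arXiv:1606.02098 — 3 statements merged into one kernel-verified Lean document; each statement's English description precedes it below -/
import Mathlib

section
/- Let A, B, C ∈ ℝ² be non-collinear. Set a = ‖C − B‖, b = ‖C − A‖, and D = (A − B)·(a/(a + b)) + B. Then the leading coefficient ‖D − C‖² − ((A − C) × (D − C))² / b² of the bisector quadratic is strictly positive. -/
noncomputable section

/-- The plane ℝ². -/
abbrev Pt := EuclideanSpace ℝ (Fin 2)

/-- 2D cross product: u × v = u.1 * v.2 − u.2 * v.1. -/
def cross (u v : Pt) : ℝ := u 0 * v 1 - u 1 * v 0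

lemma aux9 (u0 u1 w0 w1 a b : ℝ) (ha2 : a^2 = w0^2 + w1^2) (hb2 : b^2 = u0^2 + u1^2)
    (ha : 0 ≤ a) (hb : 0 < b)
    (hc : u0*w1 - u1*w0 ≠ 0) :
    0 < ((a/(a+b))*(u0-w0)+w0)^2 + ((a/(a+b))*(u1-w1)+w1)^2
      - (u0*((a/(a+b))*(u1-w1)+w1) - u1*((a/(a+b))*(u0-w0)+w0))^2 / b^2 := by
  have hab : 0 < a + b := by linarith
  have hlag : (u0*w1 - u1*w0)^2 = a^2*b^2 - (u0*w0 + u1*w1)^2 := by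
    rw [ha2, hb2]; ring
  have hc2 : 0 < (u0*w1 - u1*w0)^2 := by positivity
  have key : 0 < a*b + (u0*w0 + u1*w1) := by
    nlinarith [mul_nonneg ha hb.le]
  have hcross : u0*((a/(a+b))*(u1-w1)+w1) - u1*((a/(a+b))*(u0-w0)+w0)
      = b*(u0*w1 - u1*w0)/(a+b) := by field_simp; ring
  rw [hcross]
  have h3 : (b*(u0*w1 - u1*w0)/(a+b))^2/b^2 = (u0*w1 - u1*w0)^2/(a+b)^2 := by
    field_simp
  rw [h3, hlag, sub_pos, div_lt_iff₀ (by positivity : (0:ℝ) < (a+b)^2)]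
  have e0 : ((a/(a+b))*(u0-w0)+w0)*(a+b) = a*u0 + b*w0 := by field_simp; ring
  have e1 : ((a/(a+b))*(u1-w1)+w1)*(a+b) = a*u1 + b*w1 := by field_simp; ring
  have hexp : (((a/(a+b))*(u0-w0)+w0)^2 + ((a/(a+b))*(u1-w1)+w1)^2)*(a+b)^2
      = (a*u0 + b*w0)^2 + (a*u1 + b*w1)^2 := by
    calc (((a/(a+b))*(u0-w0)+w0)^2 + ((a/(a+b))*(u1-w1)+w1)^2)*(a+b)^2
        = (((a/(a+b))*(u0-w0)+w0)*(a+b))^2 + (((a/(a+b))*(u1-w1)+w1)*(a+b))^2 := by ring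
      _ = _ := by rw [e0, e1]
  rw [hexp]
  have hrhs : (a*u0 + b*w0)^2 + (a*u1 + b*w1)^2
      = 2*a^2*b^2 + 2*a*b*(u0*w0 + u1*w1) := by
    linear_combination (-(a^2))*hb2 + (-(b^2))*ha2
  rw [hrhs]
  nlinarith [pow_pos key 2]

theorem stmt9 (A B C : Pt) (hncol : cross (B - A) (C - A) ≠ 0) :
    let a : ℝ := ‖C - B‖
    let b : ℝ := ‖C - A‖
    let D : Pt := (a / (a + b)) • (A - B) + B
    0 < ‖D - C‖ ^ 2 - (cross (A - C) (D - C)) ^ 2 / b ^ 2 := by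
  intro a b D
  have hn : ∀ x : Pt, ‖x‖^2 = x 0 ^ 2 + x 1 ^ 2 := by
    intro x
    rw [EuclideanSpace.norm_eq, Real.sq_sqrt (by positivity)]
    simp [Fin.sum_univ_two, sq]
  have hb : 0 < b := by
    rcases eq_or_lt_of_le (norm_nonneg (C - A)) with h | h
    · exfalso
      apply hncol
      have hCA : C = A := sub_eq_zero.mp (by rw [← norm_eq_zero]; exact h.symm)
      simp [cross, hCA]
    · exact h
  have ha : 0 ≤ a := norm_nonneg _
  have ha2 : a^2 = (B 0 - C 0)^2 + (B 1 - C 1)^2 := by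
    rw [show a = ‖C - B‖ from rfl, hn]
    simp only [PiLp.sub_apply]
    ring
  have hb2 : b^2 = (A 0 - C 0)^2 + (A 1 - C 1)^2 := by
    rw [show b = ‖C - A‖ from rfl, hn]
    simp only [PiLp.sub_apply]
    ring
  have hc : (A 0 - C 0)*(B 1 - C 1) - (A 1 - C 1)*(B 0 - C 0) ≠ 0 := by
    intro h
    apply hncol
    simp only [cross, PiLp.sub_apply]
    linear_combination h
  have H := aux9 (A 0 - C 0) (A 1 - C 1) (B 0 - C 0) (B 1 - C 1) a b ha2 hb2 ha hb hc
  have hD0 : (D - C) 0 = (a/(a+b))*((A 0 - C 0) - (B 0 - C 0)) + (B 0 - C 0) := by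
    show ((a / (a + b)) • (A - B) + B - C) 0 = _
    simp only [PiLp.sub_apply, PiLp.add_apply, PiLp.smul_apply, smul_eq_mul]
    ring
  have hD1 : (D - C) 1 = (a/(a+b))*((A 1 - C 1) - (B 1 - C 1)) + (B 1 - C 1) := by
    show ((a / (a + b)) • (A - B) + B - C) 1 = _
    simp only [PiLp.sub_apply, PiLp.add_apply, PiLp.smul_apply, smul_eq_mul]
    ring
  rw [hn (D - C)]
  simp only [cross]
  rw [hD0, hD1]
  simp only [PiLp.sub_apply]
  exact H
end
end

section
/- Let A, B, C ∈ ℝ² be non-collinear and let P ∈ ℝ² lie strictly inside the wedge at C spanned by A and B, i.e. P = C + α·(A − C) + β·(B − C) with α > 0 and β > 0. Set a = ‖C − B‖, b = ‖C − A‖, D = (A − B)·(a/(a + b)) + B, and L = ‖D − C‖² − ((A − C) × (D − C))² / b². Then the quadratic equation L·t² + 2·((D − C) · (C − P))·t + ‖C − P‖² = 0 has two distinct real roots; equivalently, ((D − C) · (C − P))² − L·‖C − P‖² > 0. -/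
/-!
Put `u = A - C`, `v = B - C`, `b = ‖u‖`, `a = ‖v‖`, `q = ⟪u, v⟫` and `s = a + b`. Then
`D - C = s⁻¹ • (a • u + b • v)`, and by Lagrange's identity `‖w‖² - (u × w)² / ‖u‖² = (⟪u, w⟫ / ‖u‖)²`
for every `w`, so `L = ((a b + q) / s)²`. Expanding the other two coefficients gives the
discriminant `2 α β (a b - q) ((a b + q) / s)²`, which is positive because non-collinearity makes
Cauchy–Schwarz strict: `|q| < a b`.
-/

noncomputable section

open RealInnerProductSpace

lemma exists_ne_roots_of_discrim_pos {L M N : ℝ} (hL : L ≠ 0) (h : 0 < M ^ 2 - L * N) :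
    ∃ t₁ t₂ : ℝ, t₁ ≠ t₂ ∧ L * t₁ ^ 2 + 2 * M * t₁ + N = 0 ∧
      L * t₂ ^ 2 + 2 * M * t₂ + N = 0 := by
  set r := √(M ^ 2 - L * N)
  have hr : r ^ 2 = M ^ 2 - L * N := Real.sq_sqrt h.le
  have hr₀ : 0 < r := Real.sqrt_pos.mpr h
  refine ⟨(-M + r) / L, (-M - r) / L, ?_, ?_, ?_⟩
  · intro heq
    field_simp at heq
    linarith
  · field_simp
    linear_combination hr
  · field_simp
    linear_combination hr

section InnerProductSpace

variable {E : Type*} [NormedAddCommGroup E] [InnerProductSpace ℝ E]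

/-- The vector from the apex of the wedge spanned by `u` and `v` to the point where its bisector
meets the segment from `u` to `v` (angle bisector theorem); in the theorem it is `D - C`. -/
def bisectorDir (u v : E) : E := (‖u‖ + ‖v‖)⁻¹ • (‖v‖ • u + ‖u‖ • v)

lemma smul_sub_add_eq_bisectorDir {u v : E} (h : ‖u‖ + ‖v‖ ≠ 0) :
    (‖v‖ / (‖v‖ + ‖u‖)) • (u - v) + v = bisectorDir u v := by
  rw [bisectorDir, add_comm ‖v‖]
  match_scalars
  · field_simp
  · field_simp
    ring

lemma inner_bisectorDir (u v : E) (α β : ℝ) :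
    ⟪bisectorDir u v, α • u + β • v⟫ =
      (‖u‖ * ‖v‖ + ⟪u, v⟫) * (α * ‖u‖ + β * ‖v‖) / (‖u‖ + ‖v‖) := by
  simp only [bisectorDir, inner_smul_left, inner_add_left, inner_add_right, inner_smul_right,
    real_inner_self_eq_norm_sq, real_inner_comm u v, RCLike.conj_to_real]
  ring

lemma norm_smul_add_smul_sq (u v : E) (α β : ℝ) :
    ‖α • u + β • v‖ ^ 2 = α ^ 2 * ‖u‖ ^ 2 + 2 * α * β * ⟪u, v⟫ + β ^ 2 * ‖v‖ ^ 2 := by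
  rw [norm_add_sq_real, norm_smul, norm_smul, inner_smul_left, inner_smul_right,
    Real.norm_eq_abs, Real.norm_eq_abs, mul_pow, mul_pow, sq_abs, sq_abs, RCLike.conj_to_real]
  ring

end InnerProductSpace

lemma cross_sq_add_inner_sq (u v : Pt) : cross u v ^ 2 + ⟪u, v⟫ ^ 2 = ‖u‖ ^ 2 * ‖v‖ ^ 2 := by
  simp only [cross, EuclideanSpace.real_norm_sq_eq, PiLp.inner_apply, Fin.sum_univ_two,
    RCLike.inner_apply, conj_trivial]
  ring

lemma norm_sq_sub_cross_sq_div {u : Pt} (hu : u ≠ 0) (w : Pt) :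
    ‖w‖ ^ 2 - cross u w ^ 2 / ‖u‖ ^ 2 = (⟪u, w⟫ / ‖u‖) ^ 2 := by
  have hu' : ‖u‖ ≠ 0 := norm_ne_zero_iff.mpr hu
  field_simp
  linear_combination -cross_sq_add_inner_sq u w

lemma abs_inner_lt_norm_mul_norm_of_cross_ne_zero {u v : Pt} (h : cross u v ≠ 0) :
    |⟪u, v⟫| < ‖u‖ * ‖v‖ := by
  refine abs_lt_of_sq_lt_sq ?_ (by positivity)
  have : 0 < cross u v ^ 2 := by positivity
  rw [mul_pow, ← cross_sq_add_inner_sq]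
  linarith

lemma left_ne_zero_of_cross_ne_zero {u v : Pt} (h : cross u v ≠ 0) : u ≠ 0 := by
  rintro rfl
  simp [cross] at h

lemma right_ne_zero_of_cross_ne_zero {u v : Pt} (h : cross u v ≠ 0) : v ≠ 0 := by
  rintro rfl
  simp [cross] at h

theorem stmt10 (A B C P : Pt) (hncol : cross (B - A) (C - A) ≠ 0)
    (α β : ℝ) (hα : 0 < α) (hβ : 0 < β)
    (hP : P = C + α • (A - C) + β • (B - C)) :
    let a : ℝ := ‖C - B‖
    let b : ℝ := ‖C - A‖
    let D : Pt := (a / (a + b)) • (A - B) + B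
    let L : ℝ := ‖D - C‖ ^ 2 - (cross (A - C) (D - C)) ^ 2 / b ^ 2
    (∃ t₁ t₂ : ℝ, t₁ ≠ t₂ ∧
      (L * t₁ ^ 2 + 2 * (inner ℝ (D - C) (C - P) : ℝ) * t₁ + ‖C - P‖ ^ 2 = 0) ∧
      (L * t₂ ^ 2 + 2 * (inner ℝ (D - C) (C - P) : ℝ) * t₂ + ‖C - P‖ ^ 2 = 0)) ∧
    (inner ℝ (D - C) (C - P) : ℝ) ^ 2 - L * ‖C - P‖ ^ 2 > 0 := by
  intro a b D L
  have hcross : cross (A - C) (B - C) ≠ 0 := by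
    convert hncol using 1
    simp only [cross, PiLp.sub_apply]
    ring
  have hu : A - C ≠ 0 := left_ne_zero_of_cross_ne_zero hcross
  have hx : 0 < ‖A - C‖ := norm_pos_iff.mpr hu
  have hy : 0 < ‖B - C‖ := norm_pos_iff.mpr (right_ne_zero_of_cross_ne_zero hcross)
  obtain ⟨hq₁, hq₂⟩ := abs_lt.mp (abs_inner_lt_norm_mul_norm_of_cross_ne_zero hcross)
  have hD : D - C = bisectorDir (A - C) (B - C) := by
    rw [← smul_sub_add_eq_bisectorDir (by positivity), sub_sub_sub_cancel_right]
    simp only [D, a, b, norm_sub_rev C B, norm_sub_rev C A]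
    abel
  have hCP : C - P = -(α • (A - C) + β • (B - C)) := by rw [hP]; abel
  have hL : L = ((‖A - C‖ * ‖B - C‖ + ⟪A - C, B - C⟫) / (‖A - C‖ + ‖B - C‖)) ^ 2 := by
    have h := inner_bisectorDir (A - C) (B - C) 1 0
    simp only [one_smul, zero_smul, add_zero, one_mul, zero_mul] at h
    rw [real_inner_comm] at h
    simp only [L, b, hD, norm_sub_rev C A, norm_sq_sub_cross_sq_div hu, h]
    field_simp
  have hdisc : ⟪D - C, C - P⟫ ^ 2 - L * ‖C - P‖ ^ 2 =
      2 * α * β * (‖A - C‖ * ‖B - C‖ - ⟪A - C, B - C⟫) *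
        ((‖A - C‖ * ‖B - C‖ + ⟪A - C, B - C⟫) / (‖A - C‖ + ‖B - C‖)) ^ 2 := by
    rw [hD, hCP, inner_neg_right, norm_neg, inner_bisectorDir, norm_smul_add_smul_sq, hL]
    ring
  have hr : 0 < (‖A - C‖ * ‖B - C‖ + ⟪A - C, B - C⟫) / (‖A - C‖ + ‖B - C‖) :=
    div_pos (by linarith) (by positivity)
  have hpos : ⟪D - C, C - P⟫ ^ 2 - L * ‖C - P‖ ^ 2 > 0 := by
    rw [hdisc]
    have : 0 < ‖A - C‖ * ‖B - C‖ - ⟪A - C, B - C⟫ := by linarith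
    positivity
  exact ⟨exists_ne_roots_of_discrim_pos (by rw [hL]; positivity) hpos, hpos⟩
end
end

section
/- Let A, B, C, P ∈ ℝ² with A, B, C non-collinear. Set a = ‖C − B‖, b = ‖C − A‖, D = (A − B)·(a/(a + b)) + B, and L = ‖D − C‖² − ((A − C) × (D − C))² / b². If t ∈ ℝ is a root of L·t² + 2·((D − C) · (C − P))·t + ‖C − P‖² = 0, then the point I = (D − C)·t + C satisfies ‖I − P‖ = |(A − C) × (C − I)| / b = |(B − C) × (C − I)| / a; that is, the circle centred at I passing through P is tangent to both lines CA and CB. -/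
/-!
`D - C = (a • (A - C) + b • (B - C)) / (a + b)`, so the cross products of `D - C` with `A - C` and
with `B - C` have absolute values in the ratio `b : a = ‖A - C‖ : ‖B - C‖`: points of the line `CD`
are equidistant from the lines `CA` and `CB`. Expanding `I - P = t • (D - C) + (C - P)`, the
quadratic equation in `t` says exactly `‖I - P‖² = (t * cross (A - C) (D - C) / b)²`, the squared
distance from `I` to the line `CA`.
-/

noncomputable section

section Cross

variable (u v w : Pt) (s : ℝ)

@[simp] lemma cross_self_eq_zero : cross u u = 0 := by
  simp only [cross]; ring

@[simp] lemma cross_zero_right : cross u 0 = 0 := by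
  simp [cross]

lemma cross_swap : cross u v = -cross v u := by
  simp only [cross]; ring

@[simp] lemma cross_add_right : cross u (v + w) = cross u v + cross u w := by
  simp only [cross, PiLp.add_apply]; ring

@[simp] lemma cross_smul_right : cross u (s • v) = s * cross u v := by
  simp only [cross, PiLp.smul_apply, smul_eq_mul]; ring

end Cross

lemma smul_sub_add_sub_eq_div_smul_add_div_smul {K V : Type*} [Field K] [AddCommGroup V]
    [Module K V] {a b : K} (hab : a + b ≠ 0) (A B C : V) :
    (a / (a + b)) • (A - B) + B - C = (a / (a + b)) • (A - C) + (b / (a + b)) • (B - C) := by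
  have hsum : b / (a + b) = 1 - a / (a + b) := by field_simp; ring
  rw [hsum]
  module

lemma norm_smul_add_sq {E : Type*} [NormedAddCommGroup E] [InnerProductSpace ℝ E]
    (t : ℝ) (v w : E) :
    ‖t • v + w‖ ^ 2 = t ^ 2 * ‖v‖ ^ 2 + 2 * inner ℝ v w * t + ‖w‖ ^ 2 := by
  rw [norm_add_sq_real, norm_smul, real_inner_smul_left, mul_pow, Real.norm_eq_abs, sq_abs]
  ring

lemma norm_smul_add_eq_of_quadratic {E : Type*} [NormedAddCommGroup E] [InnerProductSpace ℝ E]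
    {v w : E} {b c t : ℝ} (hb : 0 ≤ b)
    (h : (‖v‖ ^ 2 - c ^ 2 / b ^ 2) * t ^ 2 + 2 * inner ℝ v w * t + ‖w‖ ^ 2 = 0) :
    ‖t • v + w‖ = |t * c| / b := by
  refine (sq_eq_sq₀ (norm_nonneg _) (by positivity)).1 ?_
  rw [norm_smul_add_sq, div_pow, sq_abs]
  linear_combination h

lemma abs_cross_div_eq_of_weighted_bisector {a b : ℝ} (ha : 0 < a) (hb : 0 < b) (u v : Pt) :
    |cross u ((a / (a + b)) • u + (b / (a + b)) • v)| / b =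
      |cross v ((a / (a + b)) • u + (b / (a + b)) • v)| / a := by
  simp only [cross_add_right, cross_smul_right, cross_self_eq_zero, cross_swap v u, mul_zero,
    zero_add, add_zero, mul_neg, abs_neg, abs_mul,
    abs_of_pos (by positivity : 0 < a / (a + b)), abs_of_pos (by positivity : 0 < b / (a + b))]
  field_simp

theorem stmt11 (A B C P : Pt) (hncol : cross (B - A) (C - A) ≠ 0) (t : ℝ) :
    let a : ℝ := ‖C - B‖
    let b : ℝ := ‖C - A‖
    let D : Pt := (a / (a + b)) • (A - B) + B
    let L : ℝ := ‖D - C‖ ^ 2 - (cross (A - C) (D - C)) ^ 2 / b ^ 2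
    L * t ^ 2 + 2 * (inner ℝ (D - C) (C - P) : ℝ) * t + ‖C - P‖ ^ 2 = 0 →
      let I : Pt := t • (D - C) + C
      ‖I - P‖ = |cross (A - C) (C - I)| / b ∧
        ‖I - P‖ = |cross (B - C) (C - I)| / a := by
  intro a b D L hquad I
  have hb : 0 < b := norm_pos_iff.2 <| sub_ne_zero.2 <| by rintro rfl; simp at hncol
  have ha : 0 < a := norm_pos_iff.2 <| sub_ne_zero.2 <| by rintro rfl; simp at hncol
  have hIP : I - P = t • (D - C) + (C - P) := by simp only [I]; abel
  have hCI : C - I = (-t) • (D - C) := by simp only [I]; module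
  have hdist : ‖I - P‖ = |t| * |cross (A - C) (D - C)| / b := by
    rw [hIP, ← abs_mul]
    exact norm_smul_add_eq_of_quadratic hb.le hquad
  rw [hCI, cross_smul_right, cross_smul_right, abs_mul, abs_mul, abs_neg]
  refine ⟨hdist, hdist.trans ?_⟩
  rw [mul_div_assoc, mul_div_assoc, smul_sub_add_sub_eq_div_smul_add_div_smul
    (by positivity) A B C, abs_cross_div_eq_of_weighted_bisector ha hb]
end
end
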